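/- arXiv:1912.12508 — 4 statements merged into one kernel-verified Lean document; each statement's English description precedes it below -/
import Mathlib

section
/- Let (Vₘ,ηₘ), m=1,…,4, be a non-degenerate quadruple of incomplete flags in ℝP³, with edge ratios e_{ij} and triple ratios t_{ijk} as in (ij)k-edge-face notation. Then t_{ijk} = e_{kl}·e_{jl}·e_{il}, where (ijkl) is an even permutation of (1234). -/
/-- The edge ratio `e_{ij}` of a quadruple of flags with respect to the edge-face
`(ij)k`, where `(ijkl)` is an even permutation of the indices. -/
noncomputable def edgeRatio (V : Fin 4 → (Fin 4 → ℝ))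
    (η : Fin 4 → Module.Dual ℝ (Fin 4 → ℝ)) (i j k l : Fin 4) : ℝ :=
  (η i (V k) * η j (V l)) / (η i (V l) * η j (V k))

/-- The triple ratio `t_{ijk}` of a quadruple of flags with respect to the face `(ijk)`. -/
noncomputable def tripleRatio4 (V : Fin 4 → (Fin 4 → ℝ))
    (η : Fin 4 → Module.Dual ℝ (Fin 4 → ℝ)) (i j k : Fin 4) : ℝ :=
  (η i (V j) * η j (V k) * η k (V i)) / (η i (V k) * η j (V i) * η k (V j))

/-- Internal consistency equation: `t_{ijk} = e_{kl} · e_{jl} · e_{il}` for any even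
permutation `(ijkl)` of `(1234)` and any non-degenerate quadruple of flags.  Here
`e_{kl}`, `e_{jl}`, `e_{il}` are the edge ratios of the edge-faces `(kl)i`, `(jl)k`,
`(il)j` respectively. -/
theorem internal_consistency_vertex
    (V : Fin 4 → (Fin 4 → ℝ)) (η : Fin 4 → Module.Dual ℝ (Fin 4 → ℝ))
    (hnd : ∀ i j, η i (V j) = 0 ↔ i = j)
    (p : Equiv.Perm (Fin 4)) (hp : Equiv.Perm.sign p = 1)
    (i j k l : Fin 4) (hijkl : (i, j, k, l) = (p 0, p 1, p 2, p 3)) :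
    tripleRatio4 V η i j k =
      edgeRatio V η k l i j * edgeRatio V η j l k i * edgeRatio V η i l j k := by
  obtain ⟨hi, hj, hk, hl⟩ : i = p 0 ∧ j = p 1 ∧ k = p 2 ∧ l = p 3 := by
    simpa [Prod.ext_iff] using hijkl
  have hne : ∀ a b : Fin 4, a ≠ b → η a (V b) ≠ 0 := fun a b hab h =>
    hab ((hnd a b).mp h)
  have hij : i ≠ j := by subst hi hj; simp [p.injective.ne_iff]
  have hik : i ≠ k := by subst hi hk; simp [p.injective.ne_iff]
  have hil : i ≠ l := by subst hi hl; simp [p.injective.ne_iff]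
  have hjk : j ≠ k := by subst hj hk; simp [p.injective.ne_iff]
  have hjl : j ≠ l := by subst hj hl; simp [p.injective.ne_iff]
  have hkl : k ≠ l := by subst hk hl; simp [p.injective.ne_iff]
  unfold tripleRatio4 edgeRatio
  field_simp [hne _ _ hij, hne _ _ hij.symm, hne _ _ hik, hne _ _ hik.symm,
    hne _ _ hil, hne _ _ hil.symm, hne _ _ hjk, hne _ _ hjk.symm,
    hne _ _ hjl, hne _ _ hjl.symm, hne _ _ hkl, hne _ _ hkl.symm]
end

section
/- The stabilizer in PGL(4,ℝ) of a tetrahedron of flags is trivial: if G ∈ PGL(4,ℝ) fixes each of the four flags (Vₘ,ηₘ) of a tetrahedron of flags, then G is the identity. -/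
/-- A quadruple of flags is non-degenerate when `ηᵢ(Vⱼ) = 0 ↔ i = j`. -/
def Nondeg (V : Fin 4 → (Fin 4 → ℝ)) (η : Fin 4 → Module.Dual ℝ (Fin 4 → ℝ)) : Prop :=
  ∀ i j, η i (V j) = 0 ↔ i = j

/-- A tetrahedron of flags: a non-degenerate quadruple of incomplete flags whose points
are in general position (the four representative vectors are linearly independent) and
such that some projective tetrahedron with vertices the `Vᵢ` (given by a choice of signs
`ε`) has interior disjoint from all the planes `ηₘ`. -/
def IsTetFlags (V : Fin 4 → (Fin 4 → ℝ)) (η : Fin 4 → Module.Dual ℝ (Fin 4 → ℝ)) : Prop :=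
  Nondeg V η ∧ LinearIndependent ℝ V ∧
    ∃ ε : Fin 4 → ℝ, (∀ i, ε i = 1 ∨ ε i = -1) ∧
      ∀ (m : Fin 4) (c : Fin 4 → ℝ), (∀ i, 0 < c i) →
        η m (∑ i, (c i * ε i) • V i) ≠ 0

/-- The stabilizer in `PGL(4,ℝ)` of a tetrahedron of flags is trivial: any invertible
linear map fixing each of the four flags projectively is a scalar. -/
theorem stabilizer_of_tetrahedron_of_flags_is_trivial
    (V : Fin 4 → (Fin 4 → ℝ)) (η : Fin 4 → Module.Dual ℝ (Fin 4 → ℝ))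
    (hT : IsTetFlags V η)
    (G : (Fin 4 → ℝ) ≃ₗ[ℝ] (Fin 4 → ℝ))
    (hfix : ∀ m, (∃ a : ℝ, a ≠ 0 ∧ G (V m) = a • V m) ∧
      (∃ b : ℝ, b ≠ 0 ∧ (η m).comp G.symm.toLinearMap = b • η m)) :
    ∃ c : ℝ, c ≠ 0 ∧ ∀ v, G v = c • v := by
  obtain ⟨hN, hL, -⟩ := hT
  choose a ha hGa using fun m => (hfix m).1
  choose b hb hηb using fun m => (hfix m).2
  -- key relation: for m ≠ j, b m * a j = 1
  have key : ∀ m j : Fin 4, m ≠ j → b m * a j = 1 := by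
    intro m j hmj
    have hη : η m (V j) ≠ 0 := fun h => hmj ((hN m j).1 h)
    have h := congrArg (fun f : Module.Dual ℝ (Fin 4 → ℝ) => f (G (V j))) (hηb m)
    simp only [LinearMap.comp_apply, LinearEquiv.coe_toLinearMap,
      LinearEquiv.symm_apply_apply, LinearMap.smul_apply, smul_eq_mul] at h
    rw [hGa j, map_smul, smul_eq_mul] at h
    have h' : (b m * a j - 1) * η m (V j) = 0 := by ring_nf; ring_nf at h; linarith
    rcases mul_eq_zero.mp h' with h'' | h''
    · linarith
    · exact absurd h'' hη
  have haeq : ∀ i j : Fin 4, a i = a j := by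
    intro i j
    have : ∃ m : Fin 4, m ≠ i ∧ m ≠ j := by
      revert i j; decide
    obtain ⟨m, hmi, hmj⟩ := this
    have h1 := key m i hmi
    have h2 := key m j hmj
    have hbm := hb m
    field_simp at h1 h2
    rw [← h1] at h2
    exact (mul_left_cancel₀ hbm h2).symm
  refine ⟨a 0, ha 0, ?_⟩
  have hcard : Fintype.card (Fin 4) = Module.finrank ℝ (Fin 4 → ℝ) := by simp
  let B := basisOfLinearIndependentOfCardEqFinrank hL hcard
  have hB : ∀ i, B i = V i := fun i => by
    simp [B, coe_basisOfLinearIndependentOfCardEqFinrank]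
  intro v
  have : G.toLinearMap v = ((a 0) • LinearMap.id : (Fin 4 → ℝ) →ₗ[ℝ] (Fin 4 → ℝ)) v := by
    refine LinearMap.congr_fun (B.ext fun i => ?_) v
    simp only [LinearEquiv.coe_coe, hB, LinearMap.smul_apply, LinearMap.id_apply]
    rw [hGa i, haeq i 0]
  simpa using this
end

section
/- For every tetrahedron of flags (Vₘ,ηₘ)_{m=1}^4 in ℝP³ and every edge-face (ij)k, the edge ratio e_{ij} = (ηᵢ(Vₖ)ηⱼ(Vₗ))/(ηᵢ(Vₗ)ηⱼ(Vₖ)) and the triple ratio t_{ijk} are strictly positive. -/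
open Finset

lemma sign_lemma {a x : ℝ} (h : |x - a| < |a|) : 0 < a * x := by
  rcases abs_lt.1 h with ⟨h1, h2⟩
  rcases lt_trichotomy a 0 with ha | ha | ha
  · have : |a| = -a := abs_of_neg ha
    nlinarith
  · subst ha
    simp only [abs_zero, sub_zero] at h
    exact absurd h (not_lt.2 (abs_nonneg x))
  · have : |a| = a := abs_of_pos ha
    nlinarith

lemma key_pos (V : Fin 4 → (Fin 4 → ℝ)) (η : Fin 4 → Module.Dual ℝ (Fin 4 → ℝ))
    (hnd : Nondeg V η) (ε : Fin 4 → ℝ) (hε : ∀ i, ε i = 1 ∨ ε i = -1)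
    (hne : ∀ (m : Fin 4) (c : Fin 4 → ℝ), (∀ i, 0 < c i) →
      (∑ r, (c r * ε r) * η m (V r)) ≠ 0)
    (m i j : Fin 4) (hi : i ≠ m) (hj : j ≠ m) :
    0 < (ε i * η m (V i)) * (ε j * η m (V j)) := by
  have hεabs : ∀ r, |ε r| = 1 := fun r => by rcases hε r with h | h <;> simp [h]
  have hεne : ∀ r, ε r ≠ 0 := fun r => by rcases hε r with h | h <;> simp [h]
  set A := ε i * η m (V i) with hAdef
  set B := ε j * η m (V j) with hBdef
  have hA : A ≠ 0 := mul_ne_zero (hεne i) (fun h => hi.symm ((hnd m i).1 h))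
  have hB : B ≠ 0 := mul_ne_zero (hεne j) (fun h => hj.symm ((hnd m j).1 h))
  have hAp : 0 < |A| := abs_pos.2 hA
  have hBp : 0 < |B| := abs_pos.2 hB
  set K := (∑ r, |η m (V r)|) + 1 with hKdef
  have hK1 : 1 ≤ K := by
    have : 0 ≤ ∑ r, |η m (V r)| := Finset.sum_nonneg fun r _ => abs_nonneg _
    linarith
  have hKpos : 0 < K := by linarith
  set δ := min |A| |B| / (2 * K) with hδdef
  have hδ : 0 < δ := div_pos (lt_min hAp hBp) (by linarith)
  set ca : Fin 4 → ℝ := fun r => if r = i then 1 else δ with hcadef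
  set cb : Fin 4 → ℝ := fun r => if r = j then 1 else δ with hcbdef
  have hca : ∀ r, 0 < ca r := by
    intro r; simp only [hcadef]; split
    · norm_num
    · exact hδ
  have hcb : ∀ r, 0 < cb r := by
    intro r; simp only [hcbdef]; split
    · norm_num
    · exact hδ
  set g0 := ∑ r, (ca r * ε r) * η m (V r) with hg0def
  set g1 := ∑ r, (cb r * ε r) * η m (V r) with hg1def
  have hg0 : g0 ≠ 0 := hne m ca hca
  have hg1 : g1 ≠ 0 := hne m cb hcb
  -- the key bound template
  have bound : ∀ (c : Fin 4 → ℝ) (a : Fin 4) (X : ℝ), (∀ r, r ≠ a → c r = δ) →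
      c a * ε a * η m (V a) = X →
      |(∑ r, (c r * ε r) * η m (V r)) - X| ≤ δ * (K - 1) := by
    intro c a X hc hX
    have hsplit : (∑ r, (c r * ε r) * η m (V r))
        = (∑ r ∈ Finset.univ.erase a, (c r * ε r) * η m (V r)) + X := by
      rw [← hX, ← Finset.sum_erase_add _ _ (Finset.mem_univ a)]
    rw [hsplit, add_sub_cancel_right]
    calc |∑ r ∈ Finset.univ.erase a, (c r * ε r) * η m (V r)|
        ≤ ∑ r ∈ Finset.univ.erase a, |(c r * ε r) * η m (V r)| :=
          Finset.abs_sum_le_sum_abs _ _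
      _ = ∑ r ∈ Finset.univ.erase a, δ * |η m (V r)| := by
          apply Finset.sum_congr rfl
          intro r hr
          rw [hc r (Finset.ne_of_mem_erase hr), abs_mul, abs_mul, hεabs,
            abs_of_pos hδ, mul_one]
      _ ≤ ∑ r, δ * |η m (V r)| := by
          apply Finset.sum_le_sum_of_subset_of_nonneg (Finset.erase_subset _ _)
          intro r _ _; positivity
      _ = δ * (K - 1) := by rw [← Finset.mul_sum, hKdef]; ring
  have hδK : δ * (K - 1) < min |A| |B| := by
    have h2K : (2 : ℝ) * K ≠ 0 := by positivity
    have : δ * (2 * K) = min |A| |B| := by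
      rw [hδdef, div_mul_cancel₀ _ h2K]
    nlinarith
  have hAg0 : 0 < A * g0 := by
    apply sign_lemma
    have hb := bound ca i A (fun r hr => by simp [hcadef, hr]) (by simp [hcadef, hAdef])
    have : min |A| |B| ≤ |A| := min_le_left _ _
    calc |g0 - A| ≤ δ * (K - 1) := hb
      _ < min |A| |B| := hδK
      _ ≤ |A| := this
  have hBg1 : 0 < B * g1 := by
    apply sign_lemma
    have hb := bound cb j B (fun r hr => by simp [hcbdef, hr]) (by simp [hcbdef, hBdef])
    have : min |A| |B| ≤ |B| := min_le_right _ _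
    calc |g1 - B| ≤ δ * (K - 1) := hb
      _ < min |A| |B| := hδK
      _ ≤ |B| := this
  have hg01 : 0 < g0 * g1 := by
    by_contra hcon
    push_neg at hcon
    have hlt : g0 * g1 < 0 := hcon.lt_of_ne (mul_ne_zero hg0 hg1)
    have hg0sq : 0 < g0 * g0 := mul_self_pos.2 hg0
    have hg1sq : 0 < g1 * g1 := mul_self_pos.2 hg1
    have hden : g0 - g1 ≠ 0 := by intro hd; nlinarith
    set t := g0 / (g0 - g1) with htdef
    have ht0 : 0 < t := by
      have htalt : t = (g0 * (g0 - g1)) / ((g0 - g1) ^ 2) := by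
        rw [sq, htdef, mul_div_mul_right _ _ hden]
      rw [htalt]
      apply div_pos (by nlinarith) (lt_of_le_of_ne (sq_nonneg _) (Ne.symm (pow_ne_zero 2 hden)))
    have ht1 : t < 1 := by
      have htalt : 1 - t = ((-g1) * (g0 - g1)) / ((g0 - g1) ^ 2) := by
        rw [sq, htdef]
        field_simp
        ring
      have : 0 < 1 - t := by
        rw [htalt]
        apply div_pos (by nlinarith) (lt_of_le_of_ne (sq_nonneg _) (Ne.symm (pow_ne_zero 2 hden)))
      linarith
    set ct : Fin 4 → ℝ := fun r => (1 - t) * ca r + t * cb r with hctdef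
    have hct : ∀ r, 0 < ct r := fun r =>
      add_pos (mul_pos (by linarith) (hca r)) (mul_pos ht0 (hcb r))
    have hS : ∑ r, (ct r * ε r) * η m (V r) = (1 - t) * g0 + t * g1 := by
      rw [hg0def, hg1def, Finset.mul_sum, Finset.mul_sum, ← Finset.sum_add_distrib]
      apply Finset.sum_congr rfl
      intro r _
      simp only [hctdef]; ring
    have hzero : (1 - t) * g0 + t * g1 = 0 := by
      rw [htdef]
      field_simp
      ring
    exact hne m ct hct (hS.trans hzero)
  have hAB : A * B = ((A * g0) * (B * g1)) / (g0 * g1) := by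
    field_simp
  rw [hAB]
  exact div_pos (mul_pos hAg0 hBg1) hg01

/-- For every tetrahedron of flags and every edge-face `(ij)k` (with `(ijkl)` an even
permutation of `(1234)`), the edge ratio and the triple ratio are strictly positive. -/
theorem edgeRatio_tripleRatio_pos_of_tetFlags
    (V : Fin 4 → (Fin 4 → ℝ)) (η : Fin 4 → Module.Dual ℝ (Fin 4 → ℝ))
    (hT : IsTetFlags V η)
    (p : Equiv.Perm (Fin 4)) (hp : Equiv.Perm.sign p = 1)
    (i j k l : Fin 4) (hijkl : (i, j, k, l) = (p 0, p 1, p 2, p 3)) :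
    0 < edgeRatio V η i j k l ∧ 0 < tripleRatio4 V η i j k := by

  obtain ⟨hnd, hli, ε, hε, hne⟩ := hT
  have hne' : ∀ (m : Fin 4) (c : Fin 4 → ℝ), (∀ i, 0 < c i) →
      (∑ r, (c r * ε r) * η m (V r)) ≠ 0 := by
    intro m c hc
    have := hne m c hc
    simpa [map_sum, map_smul, smul_eq_mul] using this
  have hε2 : ∀ r, ε r * ε r = 1 := fun r => by rcases hε r with h | h <;> simp [h]
  simp only [Prod.mk.injEq] at hijkl
  obtain ⟨hi, hj, hk, hl⟩ := hijkl
  subst hi; subst hj; subst hk; subst hl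
  have h01 : p 0 ≠ p 1 := p.injective.ne (by decide)
  have h02 : p 0 ≠ p 2 := p.injective.ne (by decide)
  have h03 : p 0 ≠ p 3 := p.injective.ne (by decide)
  have h12 : p 1 ≠ p 2 := p.injective.ne (by decide)
  have h13 : p 1 ≠ p 3 := p.injective.ne (by decide)
  have h23 : p 2 ≠ p 3 := p.injective.ne (by decide)
  constructor
  · -- edge ratio
    have h1 := key_pos V η hnd ε hε hne' (p 0) (p 2) (p 3) h02.symm h03.symm
    have h2 := key_pos V η hnd ε hε hne' (p 1) (p 2) (p 3) h12.symm h13.symm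
    have hprod := mul_pos h1 h2
    have heq : (ε (p 2) * η (p 0) (V (p 2)) * (ε (p 3) * η (p 0) (V (p 3)))) *
        (ε (p 2) * η (p 1) (V (p 2)) * (ε (p 3) * η (p 1) (V (p 3))))
        = (ε (p 2) * ε (p 2)) * ((ε (p 3) * ε (p 3)) *
          ((η (p 0) (V (p 2)) * η (p 1) (V (p 3))) *
            (η (p 0) (V (p 3)) * η (p 1) (V (p 2))))) := by ring
    rw [heq, hε2, hε2, one_mul, one_mul] at hprod
    have hDne : η (p 0) (V (p 3)) * η (p 1) (V (p 2)) ≠ 0 := by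
      intro h; rw [h, mul_zero] at hprod; exact lt_irrefl 0 hprod
    unfold edgeRatio
    rw [show (η (p 0) (V (p 2)) * η (p 1) (V (p 3))) / (η (p 0) (V (p 3)) * η (p 1) (V (p 2)))
        = ((η (p 0) (V (p 2)) * η (p 1) (V (p 3))) * (η (p 0) (V (p 3)) * η (p 1) (V (p 2))))
          / (η (p 0) (V (p 3)) * η (p 1) (V (p 2))) ^ 2 by
      rw [sq]; rw [mul_div_mul_right _ _ hDne]]
    exact div_pos hprod (lt_of_le_of_ne (sq_nonneg _) (Ne.symm (pow_ne_zero 2 hDne)))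
  · -- triple ratio
    have h1 := key_pos V η hnd ε hε hne' (p 0) (p 1) (p 2) h01.symm h02.symm
    have h2 := key_pos V η hnd ε hε hne' (p 1) (p 2) (p 0) h12.symm h01
    have h3 := key_pos V η hnd ε hε hne' (p 2) (p 0) (p 1) h02 h12
    have hprod := mul_pos (mul_pos h1 h2) h3
    have heq : (ε (p 1) * η (p 0) (V (p 1)) * (ε (p 2) * η (p 0) (V (p 2)))) *
        (ε (p 2) * η (p 1) (V (p 2)) * (ε (p 0) * η (p 1) (V (p 0)))) *
        (ε (p 0) * η (p 2) (V (p 0)) * (ε (p 1) * η (p 2) (V (p 1))))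
        = (ε (p 0) * ε (p 0)) * ((ε (p 1) * ε (p 1)) * ((ε (p 2) * ε (p 2)) *
          ((η (p 0) (V (p 1)) * η (p 1) (V (p 2)) * η (p 2) (V (p 0))) *
            (η (p 0) (V (p 2)) * η (p 1) (V (p 0)) * η (p 2) (V (p 1)))))) := by ring
    rw [heq, hε2, hε2, hε2, one_mul, one_mul, one_mul] at hprod
    have hDne : η (p 0) (V (p 2)) * η (p 1) (V (p 0)) * η (p 2) (V (p 1)) ≠ 0 := by
      intro h; rw [h, mul_zero] at hprod; exact lt_irrefl 0 hprod
    unfold tripleRatio4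
    rw [show (η (p 0) (V (p 1)) * η (p 1) (V (p 2)) * η (p 2) (V (p 0)))
        / (η (p 0) (V (p 2)) * η (p 1) (V (p 0)) * η (p 2) (V (p 1)))
        = ((η (p 0) (V (p 1)) * η (p 1) (V (p 2)) * η (p 2) (V (p 0)))
          * (η (p 0) (V (p 2)) * η (p 1) (V (p 0)) * η (p 2) (V (p 1))))
          / (η (p 0) (V (p 2)) * η (p 1) (V (p 0)) * η (p 2) (V (p 1))) ^ 2 by
      rw [sq]; rw [mul_div_mul_right _ _ hDne]]
    exact div_pos hprod (lt_of_le_of_ne (sq_nonneg _) (Ne.symm (pow_ne_zero 2 hDne)))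
end

section
/- Let σ = (ij)k be an edge-face with corresponding even permutation [ijkl] of (1234), and let (F, E) be a pair of tetrahedra of flags F = (Vₘ,ηₘ), E = (Wₘ,ζₘ) glued along (σ,τ). Define the gluing parameter g := − (ηᵢ(V_l)·ηⱼ(V_k)·η_{ijk}(W_{l'}))/(ηᵢ(V_k)·ηⱼ(W_{l'})·η_{ijk}(V_l)), where η_{ijk} is a linear functional cutting out the plane V_iV_jV_k. Then g is well defined: it is nonzero, independent of the choices of nonzero representatives of all points and covectors involved, and invariant under the simultaneous action of PGL(4,ℝ) on both tetrahedra of flags. -/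
/-- Projective equality of points (nonzero vectors). -/
def ProjEqVec (u v : Fin 4 → ℝ) : Prop := ∃ c : ℝ, c ≠ 0 ∧ u = c • v

/-- Projective equality of planes (nonzero covectors). -/
def ProjEqDual (φ ψ : Module.Dual ℝ (Fin 4 → ℝ)) : Prop := ∃ c : ℝ, c ≠ 0 ∧ φ = c • ψ

/-- The gluing parameter
`g = -(ηᵢ(V_l)·ηⱼ(V_k)·φ(W_{l'})) / (ηᵢ(V_k)·ηⱼ(W_{l'})·φ(V_l))`,
where `φ = η_{ijk}` is a functional cutting out the plane `VᵢVⱼVₖ`. -/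
noncomputable def gluingParam (V : Fin 4 → (Fin 4 → ℝ))
    (η : Fin 4 → Module.Dual ℝ (Fin 4 → ℝ)) (W : Fin 4 → (Fin 4 → ℝ))
    (φ : Module.Dual ℝ (Fin 4 → ℝ)) (i j k l l' : Fin 4) : ℝ :=
  -((η i (V l) * η j (V k) * φ (W l')) / (η i (V k) * η j (W l') * φ (V l)))

/-- The gluing parameter of a pair of tetrahedra of flags glued along an edge-face pair
`(σ,τ)` is well defined: it is nonzero, independent of the choice of nonzero
representatives of all points and covectors involved (including the choice of the
functional `η_{ijk}` cutting out the plane `VᵢVⱼVₖ`), and invariant under the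
simultaneous action of `PGL(4,ℝ)` on both tetrahedra of flags. -/
theorem gluingParam_well_defined
    (V : Fin 4 → (Fin 4 → ℝ)) (η : Fin 4 → Module.Dual ℝ (Fin 4 → ℝ))
    (W : Fin 4 → (Fin 4 → ℝ)) (ζ : Fin 4 → Module.Dual ℝ (Fin 4 → ℝ))
    (hF : IsTetFlags V η) (hE : IsTetFlags W ζ)
    (p q : Equiv.Perm (Fin 4)) (hp : Equiv.Perm.sign p = 1) (hq : Equiv.Perm.sign q = 1)
    (i j k l i' j' k' l' : Fin 4)
    (hσ : (i, j, k, l) = (p 0, p 1, p 2, p 3))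
    (hτ : (i', j', k', l') = (q 0, q 1, q 2, q 3))
    -- `F` and `E` are glued along `(σ,τ)`:
    (hg₁ : ProjEqVec (W j') (V i)) (hg₁' : ProjEqDual (ζ j') (η i))
    (hg₂ : ProjEqVec (W i') (V j)) (hg₂' : ProjEqDual (ζ i') (η j))
    (hg₃ : ProjEqVec (W k') (V k)) (hg₃' : ProjEqDual (ζ k') (η k))
    -- `φ` cuts out the plane `VᵢVⱼVₖ`:
    (φ : Module.Dual ℝ (Fin 4 → ℝ)) (hφ : φ ≠ 0)
    (hφi : φ (V i) = 0) (hφj : φ (V j) = 0) (hφk : φ (V k) = 0) :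
    -- the gluing parameter is nonzero:
    gluingParam V η W φ i j k l l' ≠ 0 ∧
    -- independence of the choice of the functional cutting out the plane:
    (∀ φ' : Module.Dual ℝ (Fin 4 → ℝ), φ' ≠ 0 →
      φ' (V i) = 0 → φ' (V j) = 0 → φ' (V k) = 0 →
      gluingParam V η W φ' i j k l l' = gluingParam V η W φ i j k l l') ∧
    -- independence of the choice of scalar representatives of points and covectors:
    (∀ a b a' : Fin 4 → ℝ, (∀ m, a m ≠ 0) → (∀ m, b m ≠ 0) → (∀ m, a' m ≠ 0) →
      gluingParam (fun m => a m • V m) (fun m => b m • η m)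
        (fun m => a' m • W m) φ i j k l l' = gluingParam V η W φ i j k l l') ∧
    -- invariance under the simultaneous action of `PGL(4,ℝ)`:
    (∀ G : (Fin 4 → ℝ) ≃ₗ[ℝ] (Fin 4 → ℝ),
      gluingParam (fun m => G (V m)) (fun m => (η m).comp G.symm.toLinearMap)
        (fun m => G (W m)) (φ.comp G.symm.toLinearMap) i j k l l'
        = gluingParam V η W φ i j k l l') := by
  simp only [Prod.mk.injEq] at hσ hτ
  obtain ⟨hi, hj, hk, hl⟩ := hσ
  obtain ⟨hi', hj', hk', hl'⟩ := hτ
  subst hi hj hk hl hi' hj' hk' hl'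
  -- nonzeroness of the Nondeg factors
  have hA : η (p 0) (V (p 3)) ≠ 0 := fun h =>
    (by decide : (0 : Fin 4) ≠ 3) (p.injective ((hF.1 _ _).mp h))
  have hB : η (p 1) (V (p 2)) ≠ 0 := fun h =>
    (by decide : (1 : Fin 4) ≠ 2) (p.injective ((hF.1 _ _).mp h))
  have hD : η (p 0) (V (p 2)) ≠ 0 := fun h =>
    (by decide : (0 : Fin 4) ≠ 2) (p.injective ((hF.1 _ _).mp h))
  -- η j (W l') ≠ 0 via ζ i'
  obtain ⟨c2, hc2, e2⟩ := hg₂'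
  have hE' : η (p 1) (W (q 3)) ≠ 0 := by
    have h03 : ζ (q 0) (W (q 3)) ≠ 0 := fun h =>
      (by decide : (0 : Fin 4) ≠ 3) (q.injective ((hE.1 _ _).mp h))
    rw [e2] at h03
    simp only [LinearMap.smul_apply, smul_eq_mul] at h03
    exact fun h => h03 (by rw [h, mul_zero])
  -- bases from linear independence
  have hcard : Fintype.card (Fin 4) = Module.finrank ℝ (Fin 4 → ℝ) := by simp
  have hallV : ∀ ψ : Module.Dual ℝ (Fin 4 → ℝ), ψ (V (p 0)) = 0 → ψ (V (p 1)) = 0 →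
      ψ (V (p 2)) = 0 → ψ (V (p 3)) = 0 → ψ = 0 := by
    intro ψ h0 h1 h2 h3
    let BV := basisOfLinearIndependentOfCardEqFinrank hF.2.1 hcard
    have hBV : ⇑BV = V := coe_basisOfLinearIndependentOfCardEqFinrank _ _
    refine BV.ext fun n => ?_
    rw [hBV, LinearMap.zero_apply]
    obtain ⟨m, rfl⟩ : ∃ m, p m = n := ⟨p.symm n, p.apply_symm_apply n⟩
    fin_cases m
    · exact h0
    · exact h1
    · exact h2
    · exact h3
  have hallW : ∀ ψ : Module.Dual ℝ (Fin 4 → ℝ), ψ (W (q 0)) = 0 → ψ (W (q 1)) = 0 →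
      ψ (W (q 2)) = 0 → ψ (W (q 3)) = 0 → ψ = 0 := by
    intro ψ h0 h1 h2 h3
    let BW := basisOfLinearIndependentOfCardEqFinrank hE.2.1 hcard
    have hBW : ⇑BW = W := coe_basisOfLinearIndependentOfCardEqFinrank _ _
    refine BW.ext fun n => ?_
    rw [hBW, LinearMap.zero_apply]
    obtain ⟨m, rfl⟩ : ∃ m, q m = n := ⟨q.symm n, q.apply_symm_apply n⟩
    fin_cases m
    · exact h0
    · exact h1
    · exact h2
    · exact h3
  have hFl : φ (V (p 3)) ≠ 0 := fun h => hφ (hallV φ hφi hφj hφk h)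
  -- φ vanishes on W i', W j', W k':
  obtain ⟨c1, hc1, e1⟩ := hg₁
  obtain ⟨c2', hc2', e2'⟩ := hg₂
  obtain ⟨c3, hc3, e3⟩ := hg₃
  have hw0 : φ (W (q 0)) = 0 := by rw [e2', map_smul, hφj, smul_zero]
  have hw1 : φ (W (q 1)) = 0 := by rw [e1, map_smul, hφi, smul_zero]
  have hw2 : φ (W (q 2)) = 0 := by rw [e3, map_smul, hφk, smul_zero]
  have hC : φ (W (q 3)) ≠ 0 := fun h => hφ (hallW φ hw0 hw1 hw2 h)
  refine ⟨?_, ?_, ?_, ?_⟩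
  · simp only [gluingParam]
    exact neg_ne_zero.mpr (div_ne_zero (mul_ne_zero (mul_ne_zero hA hB) hC)
      (mul_ne_zero (mul_ne_zero hD hE') hFl))
  · intro φ' hφ' h0 h1 h2
    have hc' : φ' (V (p 3)) ≠ 0 := fun h => hφ' (hallV φ' h0 h1 h2 h)
    set c := φ' (V (p 3)) / φ (V (p 3)) with hcdef
    have hcne : c ≠ 0 := div_ne_zero hc' hFl
    have heq : φ' = c • φ := by
      have hsub : φ' - c • φ = 0 := by
        refine hallV _ ?_ ?_ ?_ ?_
        · simp [h0, hφi]
        · simp [h1, hφj]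
        · simp [h2, hφk]
        · simp only [LinearMap.sub_apply, LinearMap.smul_apply, smul_eq_mul, hcdef]
          rw [div_mul_cancel₀ _ hFl, sub_self]
      exact sub_eq_zero.mp hsub
    rw [heq]
    simp only [gluingParam, LinearMap.smul_apply, smul_eq_mul]
    field_simp
  · intro a b a' ha hb ha'
    simp only [gluingParam, LinearMap.smul_apply, smul_eq_mul, map_smul]
    rw [neg_inj, div_eq_div_iff
      (mul_ne_zero (mul_ne_zero (mul_ne_zero (ha (p 2)) (mul_ne_zero (hb (p 0)) hD))
        (mul_ne_zero (ha' (q 3)) (mul_ne_zero (hb (p 1)) hE'))) (mul_ne_zero (ha (p 3)) hFl))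
      (mul_ne_zero (mul_ne_zero hD hE') hFl)]
    ring
  · intro G
    simp only [gluingParam, LinearMap.comp_apply, LinearEquiv.coe_coe,
      LinearEquiv.symm_apply_apply]
end
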